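/- Let L : ℝ^p → ℝ, λ', λ'' > 0, and suppose θ' minimizes θ ↦ L(θ) + λ'‖θ‖₂ and θ'' minimizes θ ↦ L(θ) + λ''‖θ‖₂, and that L(θ')/λ' + ‖θ'‖₂ = L(θ'')/λ'' + ‖θ''‖₂ (equal t-ridge objective values with ‖s(θ')‖₂ = λ', ‖s(θ'')‖₂ = λ''). Then L(θ')/λ' ≤ L(θ')/λ'' and L(θ'')/λ'' ≤ L(θ'')/λ'. -/

import Mathlib

theorem div_add_le_div_add_of_add_mul_le {a b a' b' c : ℝ} (hc : 0 < c)
    (h : a + c * b ≤ a' + c * b') : a / c + b ≤ a' / c + b' := by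
  have h_div := div_le_div_of_nonneg_right h hc.le
  rwa [add_div, add_div, mul_div_cancel_left₀ _ hc.ne',
    mul_div_cancel_left₀ _ hc.ne'] at h_div

theorem tridge_uniqueness_inequalities
    (p : ℕ) (L : EuclideanSpace ℝ (Fin p) → ℝ)
    (lam' lam'' : ℝ) (hlam' : 0 < lam') (hlam'' : 0 < lam'')
    (θ' θ'' : EuclideanSpace ℝ (Fin p))
    (hedr' : ∀ θ, L θ' + lam' * ‖θ'‖ ≤ L θ + lam' * ‖θ‖)
    (hedr'' : ∀ θ, L θ'' + lam'' * ‖θ''‖ ≤ L θ + lam'' * ‖θ‖)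
    (heq : L θ' / lam' + ‖θ'‖ = L θ'' / lam'' + ‖θ''‖) :
    L θ' / lam' ≤ L θ' / lam'' ∧ L θ'' / lam'' ≤ L θ'' / lam' := by
  have h_at_θ' := div_add_le_div_add_of_add_mul_le hlam'' (hedr'' θ')
  have h_at_θ'' := div_add_le_div_add_of_add_mul_le hlam' (hedr' θ'')
  exact ⟨by linarith, by linarith⟩
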